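/- Let X, Y be binary random variables with I(X ∧ Y) > 0, and let U₁, ..., U_r satisfy the interactive Markov conditions U_{2i+1} → (X, U^{2i}) → Y, U_{2i} → (Y, U^{2i-1}) → X, and X → U^r → Y. Then for every realization u^r of U^r with positive probability, either H(X | U^r = u^r) = 0 or H(Y | U^r = u^r) = 0. -/

import Mathlib

open scoped Classical
open Finset Real

noncomputable section

variable {Ω : Type*} [Fintype Ω]

/-- Pushforward probability of value `x` under random variable `X` w.r.t. pmf `p`. -/
def dist' {α : Type*} (p : Ω → ℝ) (X : Ω → α) (x : α) : ℝ :=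
  ∑ ω, if X ω = x then p ω else 0

/-- Shannon entropy, base 2. -/
def ent {α : Type*} [Fintype α] (p : Ω → ℝ) (X : Ω → α) : ℝ :=
  -∑ x, dist' p X x * Real.logb 2 (dist' p X x)

/-- Conditional entropy `H(X | Y)`. -/
def condEnt {α β : Type*} [Fintype α] [Fintype β] (p : Ω → ℝ) (X : Ω → α) (Y : Ω → β) : ℝ :=
  ent p (fun ω => (X ω, Y ω)) - ent p Y

/-- Mutual information `I(X ∧ Y)`. -/
def mi {α β : Type*} [Fintype α] [Fintype β] (p : Ω → ℝ) (X : Ω → α) (Y : Ω → β) : ℝ :=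
  ent p X + ent p Y - ent p (fun ω => (X ω, Y ω))

/-- Conditional mutual information `I(X ∧ Y | Z)`. -/
def cmi {α β γ : Type*} [Fintype α] [Fintype β] [Fintype γ]
    (p : Ω → ℝ) (X : Ω → α) (Y : Ω → β) (Z : Ω → γ) : ℝ :=
  ent p (fun ω => (X ω, Z ω)) + ent p (fun ω => (Y ω, Z ω))
    - ent p (fun ω => ((X ω, Y ω), Z ω)) - ent p Z

/-- `p` is a probability mass function on `Ω`. -/
def IsPMF (p : Ω → ℝ) : Prop := (∀ ω, 0 ≤ p ω) ∧ ∑ ω, p ω = 1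

/-- The prefix `U^i = (U_1, ..., U_i)` of an interactive sequence. -/
def pre {𝒰 : Type*} {r : ℕ} (U : Fin r → Ω → 𝒰) (i : ℕ) (h : i ≤ r) :
    Ω → (Fin i → 𝒰) :=
  fun ω k => U (Fin.castLE h k) ω

/-- Condition (P1): interactive Markov conditions.  Index `j : Fin r` corresponds to the
`(j+1)`-st message; messages with odd 1-based index (`Even j.val`) are sent by terminal 𝒳. -/
def P1cond {𝒳 𝒴 𝒰 : Type*} [Fintype 𝒳] [Fintype 𝒴] [Fintype 𝒰] {r : ℕ}
    (p : Ω → ℝ) (X : Ω → 𝒳) (Y : Ω → 𝒴) (U : Fin r → Ω → 𝒰) : Prop :=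
  ∀ j : Fin r,
    (Even j.val → cmi p (U j) Y (fun ω => (X ω, pre U j.val j.isLt.le ω)) = 0) ∧
    (¬ Even j.val → cmi p (U j) X (fun ω => (Y ω, pre U j.val j.isLt.le ω)) = 0)

/-- Condition (P2): `X -∘- U^r -∘- Y`. -/
def P2cond {𝒳 𝒴 𝒰 : Type*} [Fintype 𝒳] [Fintype 𝒴] [Fintype 𝒰] {r : ℕ}
    (p : Ω → ℝ) (X : Ω → 𝒳) (Y : Ω → 𝒴) (U : Fin r → Ω → 𝒰) : Prop :=
  cmi p X Y (pre U r le_rfl) = 0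

/-- The conditional pmf on `Ω` given the event `A = u`. -/
def condPMF {α : Type*} (p : Ω → ℝ) (A : Ω → α) (u : α) : Ω → ℝ :=
  fun ω => if A ω = u then p ω / dist' p A u else 0


/-!
By induction over the rounds, the Markov conditions (P1) keep the joint law of `(X, Y, U^i)` at
`u^i` of the form `P_{XY}(x, y) f(x) g(y)`. If both conditional laws of `X` and `Y` given
`U^r = u^r` had full support, (P2) would give `P_{XY}(x, y) f(x) g(y) P(u^r) = P(x, u^r) P(y, u^r)`
with all factors nonzero, so `P_{XY}` would be a product law and `I(X ∧ Y) = 0`. Hence one of the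
two conditional laws misses a value, and a binary variable that misses a value is constant.
Conditional independence is read off from a vanishing conditional mutual information through the
equality case of Gibbs' inequality.
-/

open InformationTheory

section Distribution

variable {α β γ : Type*} {p : Ω → ℝ}

lemma dist'_nonneg (hp : ∀ ω, 0 ≤ p ω) (A : Ω → α) (a : α) : 0 ≤ dist' p A a :=
  sum_nonneg fun ω _ => ite_nonneg (hp ω) le_rfl

lemma sum_dist'_mul [Fintype α] (p : Ω → ℝ) (A : Ω → α) (g : α → ℝ) :
    ∑ a, dist' p A a * g a = ∑ ω, p ω * g (A ω) := by
  simp only [dist', sum_mul, ite_mul, zero_mul]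
  rw [sum_comm]
  simp

lemma sum_dist' [Fintype α] (p : Ω → ℝ) (A : Ω → α) : ∑ a, dist' p A a = ∑ ω, p ω := by
  simpa using sum_dist'_mul p A fun _ => 1

lemma le_dist'_apply (hp : ∀ ω, 0 ≤ p ω) (A : Ω → α) (ω₀ : Ω) : p ω₀ ≤ dist' p A (A ω₀) := by
  unfold dist'
  simpa using single_le_sum (f := fun ω => if A ω = A ω₀ then p ω else 0)
    (fun ω _ => ite_nonneg (hp ω) le_rfl) (mem_univ ω₀)

lemma dist'_apply_pos (hp : ∀ ω, 0 ≤ p ω) {ω₀ : Ω} (hω₀ : 0 < p ω₀) (A : Ω → α) :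
    0 < dist' p A (A ω₀) :=
  hω₀.trans_le (le_dist'_apply hp A ω₀)

lemma dist'_mono (hp : ∀ ω, 0 ≤ p ω) {A : Ω → α} {B : Ω → β} {a : α} {b : β}
    (h : ∀ ω, A ω = a → B ω = b) : dist' p A a ≤ dist' p B b := by
  refine sum_le_sum fun ω _ => ?_
  by_cases hA : A ω = a
  · simp [hA, h ω hA]
  · simpa [hA] using ite_nonneg (hp ω) le_rfl

lemma dist'_congr (p : Ω → ℝ) {A : Ω → α} {B : Ω → β} {a : α} {b : β}
    (h : ∀ ω, A ω = a ↔ B ω = b) : dist' p A a = dist' p B b :=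
  sum_congr rfl fun ω _ => by simp only [h ω]

lemma sum_snd_dist'_pair [Fintype β] (p : Ω → ℝ) (A : Ω → α) (B : Ω → β) (a : α) :
    ∑ b, dist' p (fun ω => (A ω, B ω)) (a, b) = dist' p A a := by
  simp only [dist', Prod.mk.injEq]
  rw [sum_comm]
  exact sum_congr rfl fun ω _ => by by_cases h : A ω = a <;> simp [h]

lemma sum_fst_dist'_pair [Fintype α] (p : Ω → ℝ) (A : Ω → α) (B : Ω → β) (b : β) :
    ∑ a, dist' p (fun ω => (A ω, B ω)) (a, b) = dist' p B b := by
  simp only [dist', Prod.mk.injEq]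
  rw [sum_comm]
  exact sum_congr rfl fun ω _ => by by_cases h : B ω = b <;> simp [h]

lemma sum_condPMF (p : Ω → ℝ) (A : Ω → α) {u : α} (hu : dist' p A u ≠ 0) :
    ∑ ω, condPMF p A u ω = 1 :=
  calc ∑ ω, condPMF p A u ω = dist' p A u / dist' p A u := by
        simp only [condPMF, dist', sum_div, ite_div, zero_div]
    _ = 1 := div_self hu

lemma dist'_condPMF (p : Ω → ℝ) (A : Ω → α) (V : Ω → β) (u : β) (a : α) :
    dist' (condPMF p V u) A a = dist' p (fun ω => (A ω, V ω)) (a, u) / dist' p V u := by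
  simp only [condPMF, dist', sum_div]
  refine sum_congr rfl fun ω _ => ?_
  by_cases h1 : A ω = a <;> by_cases h2 : V ω = u <;> simp [h1, h2]

end Distribution

section Entropy

variable {α β : Type*} {p : Ω → ℝ}

lemma ent_eq_neg_sum [Fintype α] (p : Ω → ℝ) (A : Ω → α) :
    ent p A = -∑ ω, p ω * logb 2 (dist' p A (A ω)) := by
  rw [ent, sum_dist'_mul]

lemma ent_eq_zero_of_dist'_eq_zero {q : Ω → ℝ} (hq : ∑ ω, q ω = 1) (A : Ω → Fin 2) {x : Fin 2}
    (hx : dist' q A x = 0) : ent q A = 0 := by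
  have hsum := sum_dist' q A
  rw [hq, Fin.sum_univ_two] at hsum
  rw [ent, Fin.sum_univ_two]
  fin_cases x
  · simp_all [show dist' q A 1 = 1 by simp_all]
  · simp_all [show dist' q A 0 = 1 by simp_all]

lemma ent_condPMF_eq_zero (A : Ω → Fin 2) (V : Ω → β) {u : β} (hu : dist' p V u ≠ 0) {x : Fin 2}
    (hx : dist' p (fun ω => (A ω, V ω)) (x, u) = 0) : ent (condPMF p V u) A = 0 :=
  ent_eq_zero_of_dist'_eq_zero (sum_condPMF p V hu) A (by rw [dist'_condPMF, hx, zero_div])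

lemma mi_eq_zero_of_indep [Fintype α] [Fintype β] (hp : ∀ ω, 0 ≤ p ω) (A : Ω → α) (B : Ω → β)
    (h : ∀ a b, dist' p (fun ω => (A ω, B ω)) (a, b) = dist' p A a * dist' p B b) :
    mi p A B = 0 := by
  have hlog : ∀ ω, p ω * logb 2 (dist' p A (A ω) * dist' p B (B ω)) =
      p ω * logb 2 (dist' p A (A ω)) + p ω * logb 2 (dist' p B (B ω)) := by
    intro ω
    rcases (hp ω).eq_or_lt with h0 | hpos
    · simp [← h0]
    · rw [logb_mul (dist'_apply_pos hp hpos A).ne' (dist'_apply_pos hp hpos B).ne', mul_add]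
  simp only [mi, ent_eq_neg_sum, h, hlog, sum_add_distrib]
  ring

lemma dist'_pair_eq_mul_of_eq_mul [Fintype α] [Fintype β] (hp : IsPMF p) (A : Ω → α) (B : Ω → β)
    {f : α → ℝ} {g : β → ℝ}
    (h : ∀ a b, dist' p (fun ω => (A ω, B ω)) (a, b) = f a * g b) (a : α) (b : β) :
    dist' p (fun ω => (A ω, B ω)) (a, b) = dist' p A a * dist' p B b := by
  have hA : dist' p A a = f a * ∑ b, g b := by
    rw [← sum_snd_dist'_pair p A B a, mul_sum]; simp only [h]
  have hB : dist' p B b = (∑ a, f a) * g b := by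
    rw [← sum_fst_dist'_pair p A B b, sum_mul]; simp only [h]
  have htotal : (∑ a, f a) * ∑ b, g b = 1 := by
    rw [← hp.2, ← sum_dist' p (fun ω => (A ω, B ω)), Fintype.sum_prod_type, sum_mul_sum]
    simp only [h]
  rw [h, hA, hB]
  linear_combination (-(f a * g b)) * htotal

lemma mi_eq_zero_of_dist'_eq_mul [Fintype α] [Fintype β] (hp : IsPMF p) (A : Ω → α) (B : Ω → β)
    {f : α → ℝ} {g : β → ℝ}
    (h : ∀ a b, dist' p (fun ω => (A ω, B ω)) (a, b) = f a * g b) : mi p A B = 0 :=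
  mi_eq_zero_of_indep hp.1 A B (dist'_pair_eq_mul_of_eq_mul hp A B h)

end Entropy

lemma mul_log_div_add_sub_eq_mul_klFun (x : ℝ) {y : ℝ} (hy : y ≠ 0) :
    x * log (x / y) + y - x = y * klFun (x / y) := by
  rw [klFun_apply]
  field_simp

/-- The equality case of Gibbs' inequality. -/
theorem eq_of_sum_mul_log_div_eq_zero {ι : Type*} [Fintype ι] {ρ σ : ι → ℝ}
    (hρ : ∀ i, 0 ≤ ρ i) (hσ : ∀ i, 0 ≤ σ i) (hsupp : ∀ i, σ i = 0 → ρ i = 0)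
    (hsum : ∑ i, σ i ≤ ∑ i, ρ i) (h : ∑ i, ρ i * log (ρ i / σ i) = 0) : ρ = σ := by
  set t : ι → ℝ := fun i => ρ i * log (ρ i / σ i) + σ i - ρ i
  have ht_nonneg : ∀ i, 0 ≤ t i := by
    intro i
    rcases (hσ i).eq_or_lt with h0 | hpos
    · simp [t, ← h0, hsupp i h0.symm]
    · rw [show t i = _ from mul_log_div_add_sub_eq_mul_klFun (ρ i) hpos.ne']
      exact mul_nonneg hpos.le (klFun_nonneg (div_nonneg (hρ i) hpos.le))
  have ht_sum : ∑ i, t i = 0 := by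
    refine le_antisymm ?_ (sum_nonneg fun i _ => ht_nonneg i)
    simp only [t, sum_sub_distrib, sum_add_distrib, h]
    linarith
  have ht := (sum_eq_zero_iff_of_nonneg fun i _ => ht_nonneg i).1 ht_sum
  funext i
  rcases (hσ i).eq_or_lt with h0 | hpos
  · rw [← h0, hsupp i h0.symm]
  · have hti : σ i * klFun (ρ i / σ i) = 0 := by
      rw [← mul_log_div_add_sub_eq_mul_klFun (ρ i) hpos.ne']
      exact ht i (mem_univ i)
    have hkl := (mul_eq_zero.1 hti).resolve_left hpos.ne'
    rwa [klFun_eq_zero_iff (div_nonneg (hρ i) hpos.le), div_eq_one_iff_eq hpos.ne'] at hkl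

section CondIndep

variable {α β γ : Type*} [Fintype α] [Fintype β] [Fintype γ] {p : Ω → ℝ}

/-- The law `P_{A|C} P_{B|C} P_C` that `((A, B), C)` would have if `A` and `B` were conditionally
independent given `C`. -/
def condIndepLaw (p : Ω → ℝ) (A : Ω → α) (B : Ω → β) (C : Ω → γ) (x : (α × β) × γ) : ℝ :=
  dist' p (fun ω => (A ω, C ω)) (x.1.1, x.2) * dist' p (fun ω => (B ω, C ω)) (x.1.2, x.2) /
    dist' p C x.2

lemma cmi_mul_log_two (hp : ∀ ω, 0 ≤ p ω) (A : Ω → α) (B : Ω → β) (C : Ω → γ) :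
    cmi p A B C * log 2 =
      ∑ x, dist' p (fun ω => ((A ω, B ω), C ω)) x *
        log (dist' p (fun ω => ((A ω, B ω), C ω)) x / condIndepLaw p A B C x) := by
  rw [sum_dist'_mul p (fun ω => ((A ω, B ω), C ω)) fun x =>
    log (dist' p (fun ω => ((A ω, B ω), C ω)) x / condIndepLaw p A B C x)]
  simp only [cmi, ent_eq_neg_sum, condIndepLaw, ← sum_neg_distrib, ← sum_add_distrib,
    ← sum_sub_distrib, sum_mul]
  refine sum_congr rfl fun ω _ => ?_
  rcases (hp ω).eq_or_lt with h0 | hpos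
  · simp [← h0]
  have hABC := dist'_apply_pos hp hpos fun ω => ((A ω, B ω), C ω)
  have hAC := dist'_apply_pos hp hpos fun ω => (A ω, C ω)
  have hBC := dist'_apply_pos hp hpos fun ω => (B ω, C ω)
  have hC := dist'_apply_pos hp hpos C
  simp only [logb]
  rw [log_div hABC.ne' (by positivity), log_div (by positivity) hC.ne', log_mul hAC.ne' hBC.ne']
  field_simp
  ring

lemma sum_condIndepLaw (p : Ω → ℝ) (A : Ω → α) (B : Ω → β) (C : Ω → γ) :
    ∑ x, condIndepLaw p A B C x = ∑ ω, p ω := by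
  rw [Fintype.sum_prod_type_right, ← sum_dist' p C]
  refine sum_congr rfl fun c _ => ?_
  rw [Fintype.sum_prod_type]
  simp only [condIndepLaw, ← sum_div, ← sum_mul, ← mul_sum, sum_fst_dist'_pair]
  exact mul_self_div_self _

theorem dist'_eq_condIndepLaw_of_cmi_eq_zero (hp : ∀ ω, 0 ≤ p ω) {A : Ω → α} {B : Ω → β}
    {C : Ω → γ} (h : cmi p A B C = 0) :
    dist' p (fun ω => ((A ω, B ω), C ω)) = condIndepLaw p A B C := by
  refine eq_of_sum_mul_log_div_eq_zero (fun _ => dist'_nonneg hp _ _)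
    (fun _ => div_nonneg (mul_nonneg (dist'_nonneg hp _ _) (dist'_nonneg hp _ _))
      (dist'_nonneg hp _ _)) ?_ ?_ ?_
  · rintro ⟨⟨a, b⟩, c⟩ hσ
    by_contra hρ
    have hρpos := (dist'_nonneg hp _ _).lt_of_ne' hρ
    refine hσ.not_gt (div_pos (mul_pos ?_ ?_) ?_) <;>
      exact hρpos.trans_le (dist'_mono hp fun ω hω => by simp_all)
  · rw [sum_condIndepLaw, sum_dist']
  · rw [← cmi_mul_log_two hp, h, zero_mul]

end CondIndep

section Rectangle

variable {α β γ δ : Type*} {p : Ω → ℝ}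

/-- The rectangle property of interactive communication, at the transcript value `V = v`. -/
def RectangleAt (p : Ω → ℝ) (X : Ω → α) (Y : Ω → β) (V : Ω → γ) (v : γ) : Prop :=
  ∃ (f : α → ℝ) (g : β → ℝ), ∀ x y,
    dist' p (fun ω => ((X ω, Y ω), V ω)) ((x, y), v) =
      dist' p (fun ω => (X ω, Y ω)) (x, y) * f x * g y

lemma rectangleAt_congr {X : Ω → α} {Y : Ω → β} {V : Ω → γ} {V' : Ω → δ} {v : γ} {v' : δ}
    (h : ∀ ω, V ω = v ↔ V' ω = v') : RectangleAt p X Y V v ↔ RectangleAt p X Y V' v' := by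
  have e : ∀ x y, dist' p (fun ω => ((X ω, Y ω), V ω)) ((x, y), v) =
      dist' p (fun ω => ((X ω, Y ω), V' ω)) ((x, y), v') :=
    fun x y => dist'_congr p fun ω => by simp only [Prod.mk.injEq, h ω]
  simp only [RectangleAt, e]

lemma RectangleAt.swap {X : Ω → α} {Y : Ω → β} {V : Ω → γ} {v : γ}
    (h : RectangleAt p X Y V v) : RectangleAt p Y X V v := by
  obtain ⟨f, g, hfg⟩ := h
  refine ⟨g, f, fun y x => ?_⟩
  have e : dist' p (fun ω => ((Y ω, X ω), V ω)) ((y, x), v) =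
      dist' p (fun ω => ((X ω, Y ω), V ω)) ((x, y), v) :=
    dist'_congr p fun ω => by simp only [Prod.mk.injEq]; tauto
  have e' : dist' p (fun ω => (Y ω, X ω)) (y, x) = dist' p (fun ω => (X ω, Y ω)) (x, y) :=
    dist'_congr p fun ω => by simp only [Prod.mk.injEq]; tauto
  rw [e, e', hfg]
  ring

/-- `hW` says that `W` is a message computed by the holder of `X` from `X` and the
transcript `V`. -/
lemma RectangleAt.extend [Fintype α] [Fintype β] [Fintype γ] [Fintype δ] (hp : ∀ ω, 0 ≤ p ω)
    {X : Ω → α} {Y : Ω → β} {V : Ω → γ} {v : γ}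
    (h : RectangleAt p X Y V v) {W : Ω → δ} (hW : cmi p W Y (fun ω => (X ω, V ω)) = 0) (w : δ) :
    RectangleAt p X Y (fun ω => (V ω, W ω)) (v, w) := by
  obtain ⟨f, g, hfg⟩ := h
  refine ⟨fun x => f x * (dist' p (fun ω => (W ω, (X ω, V ω))) (w, (x, v)) /
    dist' p (fun ω => (X ω, V ω)) (x, v)), g, fun x y => ?_⟩
  have hci := congrFun (dist'_eq_condIndepLaw_of_cmi_eq_zero hp hW) ((w, y), (x, v))
  have e : dist' p (fun ω => ((X ω, Y ω), (V ω, W ω))) ((x, y), (v, w)) =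
      dist' p (fun ω => ((W ω, Y ω), (X ω, V ω))) ((w, y), (x, v)) :=
    dist'_congr p fun ω => by simp only [Prod.mk.injEq]; tauto
  have e' : dist' p (fun ω => (Y ω, (X ω, V ω))) (y, (x, v)) =
      dist' p (fun ω => ((X ω, Y ω), V ω)) ((x, y), v) :=
    dist'_congr p fun ω => by simp only [Prod.mk.injEq]; tauto
  rw [e, hci, condIndepLaw, e', hfg]
  ring

end Rectangle

lemma pre_succ_eq_iff {Ω 𝒰 : Type*} {r i : ℕ} (U : Fin r → Ω → 𝒰) (h : i < r) (ω : Ω)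
    (u : Fin (i + 1) → 𝒰) :
    pre U (i + 1) h ω = u ↔ (pre U i h.le ω, U ⟨i, h⟩ ω) = (Fin.init u, u (Fin.last i)) := by
  refine ⟨by rintro rfl; rfl, fun he => funext fun k => ?_⟩
  rw [Prod.mk.injEq] at he
  induction k using Fin.lastCases with
  | last => exact he.2
  | cast k => exact congrFun he.1 k

theorem rectangleAt_pre {𝒳 𝒴 𝒰 : Type*} [Fintype 𝒳] [Fintype 𝒴] [Fintype 𝒰] {r : ℕ}
    {p : Ω → ℝ} (hp : ∀ ω, 0 ≤ p ω) {X : Ω → 𝒳} {Y : Ω → 𝒴} {U : Fin r → Ω → 𝒰}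
    (h1 : P1cond p X Y U) (i : ℕ) (hi : i ≤ r) (u : Fin i → 𝒰) :
    RectangleAt p X Y (pre U i hi) u := by
  induction i with
  | zero =>
    refine ⟨1, 1, fun x y => ?_⟩
    simpa using dist'_congr p fun ω => by simp [Subsingleton.elim (pre U 0 hi ω) u]
  | succ i ih =>
    have hi' : i < r := hi
    rw [rectangleAt_congr fun ω => pre_succ_eq_iff U hi' ω u]
    by_cases hev : Even i
    · exact (ih hi'.le _).extend hp ((h1 ⟨i, hi'⟩).1 hev) _
    · exact ((ih hi'.le _).swap.extend hp ((h1 ⟨i, hi'⟩).2 hev) _).swap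

/-- For binary `X, Y` with `I(X ∧ Y) > 0` and interactive `U^r`, every positive-probability
realization `u^r` satisfies `H(X | U^r = u^r) = 0` or `H(Y | U^r = u^r) = 0`. -/
theorem stmt13 {Ω 𝒰 : Type*} [Fintype Ω] [Fintype 𝒰] {r : ℕ}
    (p : Ω → ℝ) (hp : IsPMF p) (X : Ω → Fin 2) (Y : Ω → Fin 2) (U : Fin r → Ω → 𝒰)
    (hI : 0 < mi p X Y)
    (h1 : P1cond p X Y U) (h2 : P2cond p X Y U) :
    ∀ u : Fin r → 𝒰, 0 < dist' p (pre U r le_rfl) u →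
      ent (condPMF p (pre U r le_rfl) u) X = 0 ∨
      ent (condPMF p (pre U r le_rfl) u) Y = 0 := by
  intro u hu
  by_contra! hent
  have hXu : ∀ x, dist' p (fun ω => (X ω, pre U r le_rfl ω)) (x, u) ≠ 0 :=
    fun x hx => hent.1 (ent_condPMF_eq_zero X _ hu.ne' hx)
  have hYu : ∀ y, dist' p (fun ω => (Y ω, pre U r le_rfl ω)) (y, u) ≠ 0 :=
    fun y hy => hent.2 (ent_condPMF_eq_zero Y _ hu.ne' hy)
  obtain ⟨f, g, hfg⟩ := rectangleAt_pre hp.1 h1 r le_rfl u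
  refine hI.ne' (mi_eq_zero_of_dist'_eq_mul hp X Y
    (f := fun x => dist' p (fun ω => (X ω, pre U r le_rfl ω)) (x, u) /
      (f x * dist' p (pre U r le_rfl) u))
    (g := fun y => dist' p (fun ω => (Y ω, pre U r le_rfl ω)) (y, u) / g y) fun x y => ?_)
  have hxy := (hfg x y).symm.trans (congrFun (dist'_eq_condIndepLaw_of_cmi_eq_zero hp.1 h2) _)
  have hne : condIndepLaw p X Y (pre U r le_rfl) ((x, y), u) ≠ 0 :=
    div_ne_zero (mul_ne_zero (hXu x) (hYu y)) hu.ne'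
  have hfx : f x ≠ 0 := fun h0 => hne (by rw [← hxy, h0]; ring)
  have hgy : g y ≠ 0 := fun h0 => hne (by rw [← hxy, h0]; ring)
  simp only [condIndepLaw] at hxy
  rw [eq_div_iff hu.ne'] at hxy
  field_simp
  linear_combination hxy
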